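/- In the global model with local reward r : A × X → ℝ, for every local policy μ and every external policy η, the expected total local reward satisfies E[Σ_{t=0}^{h−1} r(a^t, x^t)] ≤ V̂^D, where V̂^D := sup_π Σ_{(x,y)∈X×Y} b0(x,y)·ν^D_h(π)(x), the supremum ranging over all depth-h local policies π, and where the influence-optimistic plan-time (Dec-POMDP) value vectors are defined by ν^D_0(π)(x) = 0 and ν^D_{k+1}(π)(x) = r(π(ε),x) + max_{u∈U} Σ_{o∈O} Σ_{x'=(x'l,x'n)∈X} Ω(o|π(ε),x')·Pl(x'l|x,π(ε))·Pn(x'n|x,π(ε),u)·ν^D_k(π↓o)(x'). In particular, the locally-optimal value of the sub-problem is at most the influence-optimistic Q-Dec-POMDP upper bound V̂^D. -/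

import Mathlib

/-!
By induction on the remaining horizon, the expected reward of `μ` from any history is at most
`ν^D` of the continuation policy `l ↦ μ (obs ++ l)`: summing out the next external state (the
kernel `G` is stochastic) leaves exactly the local kernel `Ω · Pl · Pn(·|u)` at the influence
value `u = σ(s, (a, e))` that is actually realised, and the maximum over `u` in `ν^D` dominates
it. Averaging over `b0` finishes the proof; the bound `ν^D_h ≤ h · max r` is needed only because
`⨆` over an unbounded family of reals is `0`.
-/

open Finset

section GlobalModel

variable {Xl Xn Y A E O U : Type*}
  [Fintype Xl] [Nonempty Xl] [Fintype Xn] [Nonempty Xn] [Fintype Y] [Nonempty Y]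
  [Fintype A] [Nonempty A] [Fintype E] [Nonempty E]
  [Fintype O] [Nonempty O] [Fintype U] [Nonempty U]

/-- Expected total local reward `E[∑_{t<k} r(a^t, x^t)]` in the global model, obtained
by backward recursion over the remaining horizon `k`: local actions are chosen by the
local policy `μ` from the local observation history `obs`, external actions by the
external policy `η` from the entire history so far (current state `s` together with the
list `hist` of all past states, joint actions and observations); the global transition
probability is `Pl · Pn(·|σ) · G` and local observations have probability `Ω`. -/
noncomputable def expTotalr (Pl : Xl → (Xl × Xn) → A → ℝ)
    (Pn : Xn → (Xl × Xn) → A → U → ℝ)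
    (G : Y → ((Xl × Xn) × Y) → A × E → (Xl × Xn) → ℝ)
    (σ : ((Xl × Xn) × Y) → A × E → U) (Ω : O → A → (Xl × Xn) → ℝ)
    (r : A → (Xl × Xn) → ℝ)
    (μ : List O → A)
    (η : ((Xl × Xn) × Y) → List (((Xl × Xn) × Y) × (A × E) × O) → E) :
    ℕ → ((Xl × Xn) × Y) → List O → List (((Xl × Xn) × Y) × (A × E) × O) → ℝ
  | 0 => fun _ _ _ => 0
  | k + 1 => fun s obs hist =>
      r (μ obs) s.1 +
        ∑ s' : (Xl × Xn) × Y, ∑ o : O,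
          Pl s'.1.1 s.1 (μ obs) * Pn s'.1.2 s.1 (μ obs) (σ s (μ obs, η s hist)) *
            G s'.2 s (μ obs, η s hist) s'.1 * Ω o (μ obs) s'.1 *
            expTotalr Pl Pn G σ Ω r μ η k s' (obs ++ [o])
              (hist ++ [(s, (μ obs, η s hist), o)])

/-- Influence-optimistic plan-time (Dec-POMDP) value vectors `ν^D_k(π)(x)`. A depth-`k`
local policy is a function `List O → A`; `π []` is its action at the empty history and
`fun h => π (o :: h)` is the subtree policy `π↓o`. -/
noncomputable def nuD (Pl : Xl → (Xl × Xn) → A → ℝ) (Pn : Xn → (Xl × Xn) → A → U → ℝ)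
    (Ω : O → A → (Xl × Xn) → ℝ) (r : A → (Xl × Xn) → ℝ) :
    ℕ → (List O → A) → (Xl × Xn) → ℝ
  | 0 => fun _ _ => 0
  | k + 1 => fun π x =>
      r (π []) x +
        Finset.univ.sup' Finset.univ_nonempty (fun u : U =>
          ∑ o : O, ∑ x' : Xl × Xn,
            Ω o (π []) x' * Pl x'.1 x (π []) * Pn x'.2 x (π []) u *
              nuD Pl Pn Ω r k (fun h => π (o :: h)) x')

lemma sum_sum_mul_mul_eq_one {ι α β : Type*} [Fintype ι] [Fintype α] [Fintype β]
    (w : ι → α × β → ℝ) (hw : ∀ z, ∑ i, w i z = 1) (p : α → ℝ) (hp : ∑ a, p a = 1)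
    (q : β → ℝ) (hq : ∑ b, q b = 1) :
    ∑ i, ∑ z : α × β, w i z * p z.1 * q z.2 = 1 := by
  rw [sum_comm, Fintype.sum_prod_type]
  simp only [← sum_mul, hw, one_mul, ← mul_sum, hq, mul_one, hp]

lemma sum_prod_sum_mul_eq_of_sum_eq_one {ι α β : Type*} [Fintype ι] [Fintype α] [Fintype β]
    (g : β → α → ℝ) (hg : ∀ a, ∑ b, g b a = 1) (f : ι → α → ℝ) :
    ∑ z : α × β, ∑ i, g z.2 z.1 * f i z.1 = ∑ i, ∑ a, f i a := by
  calc ∑ z : α × β, ∑ i, g z.2 z.1 * f i z.1 = ∑ a, ∑ i, (∑ b, g b a) * f i a := by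
        rw [Fintype.sum_prod_type]
        exact sum_congr rfl fun a _ => by rw [sum_comm]; simp only [sum_mul]
    _ = ∑ i, ∑ a, f i a := by simp only [hg, one_mul]; exact sum_comm

section ValueBounds

variable (Pl : Xl → (Xl × Xn) → A → ℝ) (Pn : Xn → (Xl × Xn) → A → U → ℝ)
  (Ω : O → A → (Xl × Xn) → ℝ) (r : A → (Xl × Xn) → ℝ)

omit [Nonempty Xl] [Nonempty Xn] [Nonempty Y] [Fintype A] [Nonempty A] [Fintype E] [Nonempty E]
  [Nonempty O]

theorem nuD_le_mul_of_le (hPl0 : ∀ x'l x a, 0 ≤ Pl x'l x a)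
    (hPl1 : ∀ x a, ∑ x'l : Xl, Pl x'l x a = 1) (hPn0 : ∀ x'n x a u, 0 ≤ Pn x'n x a u)
    (hPn1 : ∀ x a u, ∑ x'n : Xn, Pn x'n x a u = 1) (hΩ0 : ∀ o a x', 0 ≤ Ω o a x')
    (hΩ1 : ∀ a x', ∑ o : O, Ω o a x' = 1) {C : ℝ} (hr : ∀ a x, r a x ≤ C) (k : ℕ)
    (π : List O → A) (x : Xl × Xn) : nuD Pl Pn Ω r k π x ≤ k * C := by
  induction k generalizing π x with
  | zero => simp [nuD]
  | succ k ih =>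
    have hstep : ∀ u : U, ∑ o : O, ∑ x' : Xl × Xn,
        Ω o (π []) x' * Pl x'.1 x (π []) * Pn x'.2 x (π []) u *
          nuD Pl Pn Ω r k (fun h => π (o :: h)) x' ≤ k * C := fun u =>
      calc _ ≤ ∑ o : O, ∑ x' : Xl × Xn,
              Ω o (π []) x' * Pl x'.1 x (π []) * Pn x'.2 x (π []) u * (k * C) := by
            gcongr with o _ x' _
            · exact mul_nonneg (mul_nonneg (hΩ0 _ _ _) (hPl0 _ _ _)) (hPn0 _ _ _ _)
            · exact ih _ x'
        _ = k * C := by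
            simp only [← sum_mul]
            rw [sum_sum_mul_mul_eq_one (fun o x' => Ω o (π []) x') (hΩ1 (π []))
              (fun x'l => Pl x'l x (π [])) (hPl1 x (π [])) (fun x'n => Pn x'n x (π []) u)
              (hPn1 x (π []) u), one_mul]
    rw [nuD]
    push_cast
    linarith [hr (π []) x, sup'_le univ_nonempty _ fun u _ => hstep u]

theorem expTotalr_le_nuD (G : Y → ((Xl × Xn) × Y) → A × E → (Xl × Xn) → ℝ)
    (σ : ((Xl × Xn) × Y) → A × E → U) (hPl0 : ∀ x'l x a, 0 ≤ Pl x'l x a)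
    (hPn0 : ∀ x'n x a u, 0 ≤ Pn x'n x a u) (hG0 : ∀ y' s ae x', 0 ≤ G y' s ae x')
    (hG1 : ∀ s ae x', ∑ y' : Y, G y' s ae x' = 1) (hΩ0 : ∀ o a x', 0 ≤ Ω o a x')
    (μ : List O → A) (η : ((Xl × Xn) × Y) → List (((Xl × Xn) × Y) × (A × E) × O) → E)
    (k : ℕ) (s : (Xl × Xn) × Y) (obs : List O)
    (hist : List (((Xl × Xn) × Y) × (A × E) × O)) :
    expTotalr Pl Pn G σ Ω r μ η k s obs hist ≤
      nuD Pl Pn Ω r k (fun l => μ (obs ++ l)) s.1 := by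
  induction k generalizing s obs hist with
  | zero => simp [expTotalr, nuD]
  | succ k ih =>
    set a := μ obs
    set e := η s hist
    set u := σ s (a, e)
    calc expTotalr Pl Pn G σ Ω r μ η (k + 1) s obs hist
        ≤ r a s.1 + ∑ s' : (Xl × Xn) × Y, ∑ o : O,
            Pl s'.1.1 s.1 a * Pn s'.1.2 s.1 a u * G s'.2 s (a, e) s'.1 * Ω o a s'.1 *
              nuD Pl Pn Ω r k (fun l => μ (obs ++ o :: l)) s'.1 := by
          rw [expTotalr]
          beta_reduce
          gcongr with s' _ o _
          · exact mul_nonneg (mul_nonneg (mul_nonneg (hPl0 _ _ _) (hPn0 _ _ _ _))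
              (hG0 _ _ _ _)) (hΩ0 _ _ _)
          · simpa using ih s' (obs ++ [o]) (hist ++ [(s, (a, e), o)])
      _ = r a s.1 + ∑ o : O, ∑ x' : Xl × Xn, Ω o a x' * Pl x'.1 s.1 a * Pn x'.2 s.1 a u *
              nuD Pl Pn Ω r k (fun l => μ (obs ++ o :: l)) x' := by
          rw [← sum_prod_sum_mul_eq_of_sum_eq_one (fun y' x' => G y' s (a, e) x') (hG1 s (a, e))]
          congr 1
          refine sum_congr rfl fun s' _ => sum_congr rfl fun o _ => ?_
          ring
      _ ≤ nuD Pl Pn Ω r (k + 1) (fun l => μ (obs ++ l)) s.1 := by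
          rw [nuD]
          simp only [List.append_nil]
          gcongr
          exact le_sup' (fun u' : U => ∑ o : O, ∑ x' : Xl × Xn,
            Ω o a x' * Pl x'.1 s.1 a * Pn x'.2 s.1 a u' *
              nuD Pl Pn Ω r k (fun l => μ (obs ++ o :: l)) x') (mem_univ u)

end ValueBounds

theorem expTotalr_le_IO_QDecPOMDP_general
    (Pl : Xl → (Xl × Xn) → A → ℝ) (Pn : Xn → (Xl × Xn) → A → U → ℝ)
    (G : Y → ((Xl × Xn) × Y) → A × E → (Xl × Xn) → ℝ)
    (σ : ((Xl × Xn) × Y) → A × E → U) (Ω : O → A → (Xl × Xn) → ℝ)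
    (r : A → (Xl × Xn) → ℝ)
    (hPl0 : ∀ x'l x a, 0 ≤ Pl x'l x a) (hPl1 : ∀ x a, ∑ x'l : Xl, Pl x'l x a = 1)
    (hPn0 : ∀ x'n x a u, 0 ≤ Pn x'n x a u) (hPn1 : ∀ x a u, ∑ x'n : Xn, Pn x'n x a u = 1)
    (hG0 : ∀ y' s ae x', 0 ≤ G y' s ae x') (hG1 : ∀ s ae x', ∑ y' : Y, G y' s ae x' = 1)
    (hΩ0 : ∀ o a x', 0 ≤ Ω o a x') (hΩ1 : ∀ a x', ∑ o : O, Ω o a x' = 1)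
    (b0 : (Xl × Xn) × Y → ℝ) (hb00 : ∀ s, 0 ≤ b0 s)
    (h : ℕ) (μ : List O → A)
    (η : ((Xl × Xn) × Y) → List (((Xl × Xn) × Y) × (A × E) × O) → E) :
    ∑ s : (Xl × Xn) × Y, b0 s * expTotalr Pl Pn G σ Ω r μ η h s [] [] ≤
      ⨆ π : List O → A, ∑ p : (Xl × Xn) × Y, b0 p * nuD Pl Pn Ω r h π p.1 := by
  obtain ⟨C, hC⟩ := Finite.exists_le fun p : A × (Xl × Xn) => r p.1 p.2
  have hbdd : BddAbove (Set.range fun π : List O → A =>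
      ∑ p : (Xl × Xn) × Y, b0 p * nuD Pl Pn Ω r h π p.1) := by
    refine ⟨∑ p : (Xl × Xn) × Y, b0 p * (h * C), ?_⟩
    rintro _ ⟨π, rfl⟩
    exact sum_le_sum fun p _ => mul_le_mul_of_nonneg_left
      (nuD_le_mul_of_le Pl Pn Ω r hPl0 hPl1 hPn0 hPn1 hΩ0 hΩ1 (fun a x => hC (a, x)) h π p.1)
      (hb00 p)
  calc ∑ s : (Xl × Xn) × Y, b0 s * expTotalr Pl Pn G σ Ω r μ η h s [] []
      ≤ ∑ s : (Xl × Xn) × Y, b0 s * nuD Pl Pn Ω r h μ s.1 := by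
        gcongr with s _
        · exact hb00 s
        · exact expTotalr_le_nuD Pl Pn Ω r G σ hPl0 hPn0 hG0 hG1 hΩ0 μ η h s [] []
    _ ≤ _ := le_ciSup hbdd μ

/-- in the global model, for every local policy `μ` and every external
policy `η`, the expected total local reward is at most the influence-optimistic
Q-Dec-POMDP upper bound `V̂^D = sup_π ∑_{(x,y)} b0(x,y) · ν^D_h(π)(x)`; in particular
the locally-optimal value of the sub-problem is at most `V̂^D`. -/
theorem expTotalr_le_IO_QDecPOMDP
    (Pl : Xl → (Xl × Xn) → A → ℝ) (Pn : Xn → (Xl × Xn) → A → U → ℝ)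
    (G : Y → ((Xl × Xn) × Y) → A × E → (Xl × Xn) → ℝ)
    (σ : ((Xl × Xn) × Y) → A × E → U) (Ω : O → A → (Xl × Xn) → ℝ)
    (r : A → (Xl × Xn) → ℝ)
    (hPl0 : ∀ x'l x a, 0 ≤ Pl x'l x a) (hPl1 : ∀ x a, ∑ x'l : Xl, Pl x'l x a = 1)
    (hPn0 : ∀ x'n x a u, 0 ≤ Pn x'n x a u) (hPn1 : ∀ x a u, ∑ x'n : Xn, Pn x'n x a u = 1)
    (hG0 : ∀ y' s ae x', 0 ≤ G y' s ae x') (hG1 : ∀ s ae x', ∑ y' : Y, G y' s ae x' = 1)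
    (hΩ0 : ∀ o a x', 0 ≤ Ω o a x') (hΩ1 : ∀ a x', ∑ o : O, Ω o a x' = 1)
    (b0 : (Xl × Xn) × Y → ℝ) (hb00 : ∀ s, 0 ≤ b0 s) (hb01 : ∑ s : (Xl × Xn) × Y, b0 s = 1)
    (h : ℕ) (μ : List O → A)
    (η : ((Xl × Xn) × Y) → List (((Xl × Xn) × Y) × (A × E) × O) → E) :
    ∑ s : (Xl × Xn) × Y, b0 s * expTotalr Pl Pn G σ Ω r μ η h s [] [] ≤
      ⨆ π : List O → A, ∑ p : (Xl × Xn) × Y, b0 p * nuD Pl Pn Ω r h π p.1 :=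
  expTotalr_le_IO_QDecPOMDP_general Pl Pn G σ Ω r hPl0 hPl1 hPn0 hPn1 hG0 hG1 hΩ0 hΩ1 b0 hb00 h μ η

end GlobalModel
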